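/- Let $N \geq 2$ and $\epsilon > 0$. Then there exists an integer $r$ (any $r$ with $2^{r-1}/(r+3) > 1/\epsilon$ works) and, for all sufficiently large $n$, a set $S_n \subseteq \{0,\dots,N-1\}^n$ with $|S_n| \geq N^{(1-\epsilon)n}$ such that $M(S_n) \leq r$. In particular, there is a family of sets $S_n$ with $M(S_n)$ uniformly bounded and $\frac{\log_N |S_n|}{n} > 1 - \epsilon$ for every $n$. -/

import Mathlib

/-!
An `(r + 1)`-dimensional affine cube is determined by `r + 2` of its vertices, so a box of
`M = N ^ n` points contains at most `M ^ (r + 2)` cubes, each a set of `K = 2 ^ (r + 1)` points.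
A fixed `K`-set lies in a `C(s, K) / C(M, K)` fraction of the `s`-subsets of the box, so by the
union bound some `s`-subset contains no such cube, i.e. has `M(S) ≤ r`, as soon as
`M ^ (r + 2) C(s, K) < C(M, K)`. For `s ≈ M ^ (1 - ε)` this is roughly
`4 ^ K M ^ (r + 2 + (1 - ε) K) < M ^ K`, which holds for large `M` because
`ε K = 4 ε 2 ^ (r - 1) > r + 2`.
-/

open scoped BigOperators

/-- The 0/1 cube in `ℤ^m`. -/
def cube (m : ℕ) : Set (Fin m → ℤ) := {v | ∀ i, v i = 0 ∨ v i = 1}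

/-- `S` contains an affine copy of the `m`-dimensional 0/1 cube: there is a map
`ι` which is affine (of the form `y ↦ A y + z` on the cube), injective on the
cube, and whose image of the cube is contained in `S`. -/
def HasCube {n : ℕ} (S : Set (Fin n → ℤ)) (m : ℕ) : Prop :=
  ∃ ι : (Fin m → ℤ) → (Fin n → ℤ),
    (∃ A : Matrix (Fin n) (Fin m) ℤ, ∃ z : Fin n → ℤ, ∀ y ∈ cube m, ι y = A.mulVec y + z) ∧
    Set.InjOn ι (cube m) ∧ ι '' (cube m) ⊆ S

/-- `M(S)`: the largest `m` such that `S` contains an affine copy of the `m`-cube. -/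
noncomputable def Mval {n : ℕ} (S : Set (Fin n → ℤ)) : ℕ := sSup {m | HasCube S m}

/-- The box `{0,1,…,N-1}^n` inside `ℤ^n`. -/
noncomputable def box (N n : ℕ) : Finset (Fin n → ℤ) := Fintype.piFinset fun _ => Finset.Icc 0 ((N : ℤ) - 1)

/-- `f_N(n,c)`: the minimal value of `M(S)` over subsets `S` of the box of density at least `c`. -/
noncomputable def fN (N n : ℕ) (c : ℝ) : ℕ :=
  sInf {k | ∃ S : Finset (Fin n → ℤ), S ⊆ box N n ∧ c * (N : ℝ) ^ n ≤ S.card ∧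
    Mval (S : Set (Fin n → ℤ)) = k}

open Filter
open scoped Finset

section CubeCounting

open Finset

lemma hasCube_of_hasCube_succ {n m : ℕ} {S : Set (Fin n → ℤ)}
    (h : HasCube S (m + 1)) : HasCube S m := by
  obtain ⟨ι, ⟨A, z, hι⟩, hinj, hS⟩ := h
  have hcons : ∀ y ∈ cube m, (Fin.cons 0 y : Fin (m + 1) → ℤ) ∈ cube (m + 1) :=
    fun y hy i => Fin.cases (Or.inl rfl) hy i
  refine ⟨fun y => ι (Fin.cons 0 y), ⟨A.submatrix id Fin.succ, z, fun y hy => ?_⟩,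
    fun y hy y' hy' h => Fin.cons_right_injective _ (hinj (hcons y hy) (hcons y' hy') h),
    ?_⟩
  · change ι _ = _
    rw [hι _ (hcons y hy)]
    ext j
    simp [Matrix.mulVec, dotProduct, Fin.sum_univ_succ]
  · rintro _ ⟨y, hy, rfl⟩
    exact hS ⟨_, hcons y hy, rfl⟩

lemma hasCube_antitone {n : ℕ} (S : Set (Fin n → ℤ)) : Antitone (HasCube S) :=
  antitone_nat_of_succ_le fun _ => hasCube_of_hasCube_succ

lemma Mval_le_of_not_hasCube {n r : ℕ} {S : Set (Fin n → ℤ)} (h : ¬ HasCube S (r + 1)) :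
    Mval S ≤ r :=
  csSup_le' fun _ hm => not_lt.1 fun hlt => h (hasCube_antitone S hlt hm)

def cubeVertices (m : ℕ) : Finset (Fin m → ℤ) := Fintype.piFinset fun _ => {0, 1}

lemma mem_cubeVertices {m : ℕ} {y : Fin m → ℤ} : y ∈ cubeVertices m ↔ y ∈ cube m := by
  simp [cubeVertices, cube]

lemma card_cubeVertices (m : ℕ) : #(cubeVertices m) = 2 ^ m := by
  simp [cubeVertices]

/-- An affine cube is determined by its vertices at `0` and at the unit vectors, so the cubes
inside `B` are indexed by `Fin (m + 1) → B`: there are at most `#B ^ (m + 1)` of them. -/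
def cubeImage {n m : ℕ} (q : Fin (m + 1) → Fin n → ℤ) : Finset (Fin n → ℤ) :=
  (cubeVertices m).image fun y => q 0 + ∑ i, y i • (q i.succ - q 0)

lemma exists_cubeImage_of_hasCube {n m : ℕ} {S : Set (Fin n → ℤ)} (h : HasCube S m) :
    ∃ q : Fin (m + 1) → Fin n → ℤ, (∀ i, q i ∈ S) ∧ ↑(cubeImage q) ⊆ S ∧
      #(cubeImage q) = 2 ^ m := by
  classical
  obtain ⟨ι, ⟨A, z, hι⟩, hinj, hS⟩ := h
  have hunit : ∀ i, (Pi.single i 1 : Fin m → ℤ) ∈ cube m := fun i k => by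
    by_cases hk : k = i <;> simp [hk]
  have hzero : (0 : Fin m → ℤ) ∈ cube m := fun _ => Or.inl rfl
  let q : Fin (m + 1) → Fin n → ℤ := Fin.cons z fun i => z + A.col i
  have hq : ∀ y ∈ cube m, q 0 + ∑ i, y i • (q i.succ - q 0) = ι y := fun y hy => by
    rw [hι y hy]
    ext j
    simp [q, Matrix.mulVec, dotProduct, mul_comm, add_comm]
  refine ⟨q, Fin.forall_fin_succ.2 ⟨?_, fun i => ?_⟩, ?_, ?_⟩
  · simpa [q, hι 0 hzero] using hS ⟨0, hzero, rfl⟩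
  · simpa [q, hι _ (hunit i), Matrix.mulVec_single_one, add_comm] using hS ⟨_, hunit i, rfl⟩
  · intro x hx
    obtain ⟨y, hy, rfl⟩ := mem_image.1 hx
    rw [mem_cubeVertices] at hy
    exact hq y hy ▸ hS ⟨y, hy, rfl⟩
  · unfold cubeImage
    rw [card_image_of_injOn, card_cubeVertices]
    intro y hy y' hy' h
    rw [mem_coe, mem_cubeVertices] at hy hy'
    refine hinj hy hy' ?_
    rw [← hq y hy, ← hq y' hy']
    exact h

theorem exists_subset_card_eq_forall_not_subset {α ι : Type*} [DecidableEq α] {B : Finset α}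
    {Q : Finset ι} {T : ι → Finset α} {s K : ℕ} (hT : ∀ q ∈ Q, T q ⊆ B ∧ #(T q) = K)
    (hs : s ≤ #B) (hQ : #Q * s.choose K < (#B).choose K) :
    ∃ S ⊆ B, #S = s ∧ ∀ q ∈ Q, ¬ T q ⊆ S := by
  by_contra! hcover
  have hcover' : ∀ S ∈ B.powersetCard s, ∃ q ∈ Q, T q ⊆ S := fun S hS =>
    hcover S (mem_powersetCard.1 hS).1 (mem_powersetCard.1 hS).2
  have hKs : K ≤ s := by
    obtain ⟨S, hS⟩ := powersetCard_nonempty.2 hs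
    obtain ⟨q, hq, hqS⟩ := hcover' S hS
    exact (hT q hq).2 ▸ (mem_powersetCard.1 hS).2 ▸ card_le_card hqS
  have hcount : (#B).choose s ≤ #Q * (#B - K).choose (s - K) := calc
    (#B).choose s = #(B.powersetCard s) := (card_powersetCard _ _).symm
    _ ≤ ∑ q ∈ Q, #((B.powersetCard s).filter (T q ⊆ ·)) := by
      refine (card_le_card fun S hS => ?_).trans card_biUnion_le
      obtain ⟨q, hq, hqS⟩ := hcover' S hS
      exact mem_biUnion.2 ⟨q, hq, mem_filter.2 ⟨hS, hqS⟩⟩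
    _ = ∑ _ ∈ Q, (#B - K).choose (s - K) := sum_congr rfl fun q hq => by
      obtain ⟨hqB, hqK⟩ := hT q hq
      rw [card_filter_powersetCard_subset _ _ _ hqB (hqK ▸ hKs), hqK]
    _ = #Q * (#B - K).choose (s - K) := by rw [sum_const, smul_eq_mul]
  have hpos : 0 < (#B - K).choose (s - K) := Nat.choose_pos (by omega)
  refine hQ.not_ge (Nat.le_of_mul_le_mul_right ?_ hpos)
  calc (#B).choose K * (#B - K).choose (s - K) = (#B).choose s * s.choose K :=
        (Nat.choose_mul hKs).symm
    _ ≤ #Q * (#B - K).choose (s - K) * s.choose K := Nat.mul_le_mul_right _ hcount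
    _ = #Q * s.choose K * (#B - K).choose (s - K) := by ring

lemma exists_subset_card_eq_not_hasCube {n : ℕ} (B : Finset (Fin n → ℤ)) {m s : ℕ}
    (hs : s ≤ #B) (h : #B ^ (m + 1) * s.choose (2 ^ m) < (#B).choose (2 ^ m)) :
    ∃ S ⊆ B, #S = s ∧ ¬ HasCube (S : Set (Fin n → ℤ)) m := by
  classical
  let Q := (Fintype.piFinset fun _ : Fin (m + 1) => B).filter
    fun q => cubeImage q ⊆ B ∧ #(cubeImage q) = 2 ^ m
  have hQ : #Q ≤ #B ^ (m + 1) := (card_filter_le _ _).trans (by simp)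
  obtain ⟨S, hSB, hSs, hS⟩ := exists_subset_card_eq_forall_not_subset (Q := Q)
    (fun q hq => (mem_filter.1 hq).2) hs ((Nat.mul_le_mul_right _ hQ).trans_lt h)
  refine ⟨S, hSB, hSs, fun hcube => ?_⟩
  obtain ⟨q, hqS, himg, hcard⟩ := exists_cubeImage_of_hasCube hcube
  rw [coe_subset] at himg
  exact hS q (mem_filter.2 ⟨Fintype.mem_piFinset.2 fun i => hSB (hqS i), himg.trans hSB, hcard⟩)
    himg

end CubeCounting

lemma pow_mul_pow_lt_half_pow {a s δ : ℝ} {p K : ℕ} (ha : 0 < a)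
    (hlarge : 4 ^ K < a ^ (δ * K - p)) (hs0 : 0 ≤ s) (hs : s ≤ 2 * a ^ (1 - δ)) :
    a ^ p * s ^ K < (a / 2) ^ K := calc
  a ^ p * s ^ K ≤ a ^ p * (2 * a ^ (1 - δ)) ^ K := by gcongr
  _ = a ^ (p : ℝ) * a ^ ((1 - δ) * K) * 2 ^ K := by
    rw [mul_pow, ← Real.rpow_natCast (a ^ (1 - δ)), ← Real.rpow_mul ha.le, Real.rpow_natCast]
    ring
  _ < a ^ (p : ℝ) * a ^ ((1 - δ) * K) * a ^ (δ * K - p) / 2 ^ K := by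
    rw [lt_div_iff₀ (by positivity), mul_assoc _ (2 ^ K), ← mul_pow]
    exact mul_lt_mul_of_pos_left (by norm_num [hlarge]) (by positivity)
  _ = (a / 2) ^ K := by
    rw [← Real.rpow_add ha, ← Real.rpow_add ha, div_pow, ← Real.rpow_natCast a K]
    ring_nf

lemma eventually_pow_mul_choose_ceil_rpow_lt_choose {p K : ℕ} {δ : ℝ} (hδ : δ ≤ 1)
    (hp : p < δ * K) :
    ∀ᶠ M : ℕ in atTop, M ^ p * (⌈(M : ℝ) ^ (1 - δ)⌉₊).choose K < M.choose K := by
  have hlarge : ∀ᶠ M : ℕ in atTop, (4 : ℝ) ^ K < (M : ℝ) ^ (δ * K - p) :=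
    ((tendsto_rpow_atTop (by linarith)).comp tendsto_natCast_atTop_atTop).eventually_gt_atTop _
  filter_upwards [hlarge, eventually_ge_atTop (2 * K), eventually_ge_atTop 1] with M hM hKM hM1
  set s := ⌈(M : ℝ) ^ (1 - δ)⌉₊
  have hM1' : 1 ≤ (M : ℝ) := Nat.one_le_cast.2 hM1
  have hs : (s : ℝ) ≤ 2 * (M : ℝ) ^ (1 - δ) := by
    have h1 : 1 ≤ (M : ℝ) ^ (1 - δ) := Real.one_le_rpow hM1' (by linarith)
    linarith [Nat.ceil_lt_add_one (zero_le_one.trans h1)]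
  have hhalf : (M : ℝ) / 2 ≤ ((M + 1 - K : ℕ) : ℝ) := by
    have : (2 * K : ℝ) ≤ M := by exact_mod_cast hKM
    rw [Nat.cast_sub (by omega)]
    push_cast
    linarith
  have hnat : M ^ p * s ^ K < (M + 1 - K) ^ K := by
    have := (pow_mul_pow_lt_half_pow (one_pos.trans_le hM1') hM s.cast_nonneg hs).trans_le
      (pow_le_pow_left₀ (by positivity) hhalf K)
    exact_mod_cast this
  refine Nat.lt_of_mul_lt_mul_left (a := K.factorial) ?_
  rw [← Nat.descFactorial_eq_factorial_mul_choose, mul_left_comm,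
    ← Nat.descFactorial_eq_factorial_mul_choose]
  calc M ^ p * s.descFactorial K ≤ M ^ p * s ^ K := by gcongr; exact Nat.descFactorial_le_pow _ _
    _ < (M + 1 - K) ^ K := hnat
    _ ≤ M.descFactorial K := Nat.pow_sub_le_descFactorial _ _

lemma card_box (N n : ℕ) : #(box N n) = N ^ n := by
  simp [box]

lemma exists_pos_one_div_lt_two_pow_div (ε : ℝ) :
    ∃ r : ℕ, 0 < r ∧ 1 / ε < 2 ^ (r - 1) / ((r : ℝ) + 3) := by
  obtain ⟨k, hk⟩ := exists_nat_ge (1 / ε)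
  refine ⟨2 * k + 4, by omega, ?_⟩
  have hk2 : (k : ℝ) + 1 ≤ 2 ^ k := by exact_mod_cast Nat.lt_two_pow_self
  rw [show 2 * k + 4 - 1 = k + k + 3 by omega, lt_div_iff₀ (by positivity), pow_add, pow_add]
  push_cast
  nlinarith [mul_le_mul_of_nonneg_right hk (by positivity : (0 : ℝ) ≤ 2 * k + 7)]

lemma lt_min_one_mul_two_pow {ε : ℝ} {r : ℕ} (hε : 0 < ε) (hr0 : 0 < r)
    (hr : 1 / ε < 2 ^ (r - 1) / ((r : ℝ) + 3)) : (r : ℝ) + 2 < min ε 1 * 2 ^ (r + 1) := by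
  have hpow : (2 : ℝ) ^ (r + 1) = 4 * 2 ^ (r - 1) := by
    rw [show r + 1 = r - 1 + 2 by omega, pow_add]; ring
  have hr' : (r : ℝ) + 3 < 2 ^ (r - 1) * ε := by
    rwa [div_lt_div_iff₀ hε (by positivity), one_mul] at hr
  have h2 : (r : ℝ) + 2 < 2 ^ (r + 1) := by
    have := r.lt_two_pow_self
    exact_mod_cast (show r + 2 < 2 ^ (r + 1) by rw [pow_succ]; omega)
  rw [min_mul_of_nonneg _ _ (by positivity), lt_min_iff]
  constructor <;> nlinarith

theorem stmt15 (N : ℕ) (hN : 2 ≤ N) (ε : ℝ) (hε : 0 < ε) :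
    ∃ r : ℕ, 1 / ε < 2 ^ (r - 1) / ((r : ℝ) + 3) ∧
      ∀ᶠ n : ℕ in Filter.atTop, ∃ S : Finset (Fin n → ℤ),
        S ⊆ box N n ∧ (N : ℝ) ^ ((1 - ε) * n) ≤ (S.card : ℝ) ∧
        Mval (S : Set (Fin n → ℤ)) ≤ r := by
  obtain ⟨r, hr0, hr⟩ := exists_pos_one_div_lt_two_pow_div ε
  refine ⟨r, hr, ?_⟩
  set δ := min ε 1
  have hδ : ((r + 2 : ℕ) : ℝ) < δ * (2 ^ (r + 1) : ℕ) := by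
    push_cast; exact lt_min_one_mul_two_pow hε hr0 hr
  have hδ0 : 0 < δ := lt_min hε one_pos
  filter_upwards [(tendsto_pow_atTop_atTop_of_one_lt hN).eventually
    (eventually_pow_mul_choose_ceil_rpow_lt_choose (min_le_right ε 1) hδ)] with n hn
  have hM : (1 : ℝ) ≤ (N ^ n : ℕ) := by exact_mod_cast Nat.one_le_pow _ _ (by omega)
  obtain ⟨S, hSB, hS, hcube⟩ := exists_subset_card_eq_not_hasCube (box N n) (m := r + 1)
    (s := ⌈((N ^ n : ℕ) : ℝ) ^ (1 - δ)⌉₊)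
    (by rw [card_box]; exact Nat.ceil_le.2 (Real.rpow_le_self_of_one_le hM (by linarith)))
    (by rwa [card_box])
  refine ⟨S, hSB, ?_, Mval_le_of_not_hasCube hcube⟩
  calc (N : ℝ) ^ ((1 - ε) * n) = ((N ^ n : ℕ) : ℝ) ^ (1 - ε) := by
        rw [Nat.cast_pow, ← Real.rpow_natCast, ← Real.rpow_mul (by positivity), mul_comm]
    _ ≤ ((N ^ n : ℕ) : ℝ) ^ (1 - δ) :=
        Real.rpow_le_rpow_of_exponent_le hM (by linarith [min_le_left ε 1])
    _ ≤ #S := hS ▸ Nat.le_ceil _
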